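/- Let k ≥ 1, let S, S' ⊆ [0,k] be subsets of the same size n, and let g : S → S' be a bijection such that g(i) ∈ {i−1, i, i+1} for every i ∈ S. Then there exists a collection of pairwise disjoint subintervals I_1, …, I_r ⊆ [0,k] such that: S ∖ (I_1 ∪ … ∪ I_r) = S' ∖ (I_1 ∪ … ∪ I_r); g(i) = i for every i ∈ S ∖ (I_1 ∪ … ∪ I_r); and each I_j satisfies one of the following three conditions: (1) I_j = [i, i+1] with both i, i+1 ∈ S ∩ S', and g swaps i and i+1; (2) I_j = [a,b] with S ∩ I_j = [a, b−1], S' ∩ I_j = [a+1, b], and g(i) = i+1 for every i ∈ S ∩ I_j; (3) I_j = [a,b] with S' ∩ I_j = [a, b−1], S ∩ I_j = [a+1, b], and g(i) = i−1 for every i ∈ S ∩ I_j. -/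

import Mathlib

/-!
Take as blocks all intervals `[a, b] ⊆ [0, k]` with `a < b` of one of the three types. Distinct
blocks never meet: two up-shifted runs that meet start at the same point of `S \ S'` and end at
the first point after it outside `S`; an up- and a down-shifted run can only touch in a point
that would be the image of both of its neighbours, which injectivity forbids. Every moved point
`i` lies in a block together with `g i`: if `g i = i + 1` and `g` does not swap `i, i + 1`, the
run of up-moving points through `i` reaching down to a point outside `S'` and up to the first
point outside `S` is a block, since injectivity keeps every point of `S` after `i` moving up
until the run leaves `S`. The case `g i = i - 1` is the same one for the inverse bijection
`S' → S`. Off the blocks `g` is therefore the identity, so there `S` and `S'` agree.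
-/

namespace UnitDisplacement

open Finset

def IsSwap (S S' : Finset ℤ) (g : ℤ → ℤ) (p : ℤ × ℤ) : Prop :=
  p.2 = p.1 + 1 ∧ p.1 ∈ S ∩ S' ∧ p.2 ∈ S ∩ S' ∧ g p.1 = p.2 ∧ g p.2 = p.1

def IsRightShift (S S' : Finset ℤ) (g : ℤ → ℤ) (p : ℤ × ℤ) : Prop :=
  S ∩ Icc p.1 p.2 = Icc p.1 (p.2 - 1) ∧ S' ∩ Icc p.1 p.2 = Icc (p.1 + 1) p.2 ∧
    ∀ i ∈ S ∩ Icc p.1 p.2, g i = i + 1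

def IsLeftShift (S S' : Finset ℤ) (g : ℤ → ℤ) (p : ℤ × ℤ) : Prop :=
  S' ∩ Icc p.1 p.2 = Icc p.1 (p.2 - 1) ∧ S ∩ Icc p.1 p.2 = Icc (p.1 + 1) p.2 ∧
    ∀ i ∈ S ∩ Icc p.1 p.2, g i = i - 1

def IsBlock (S S' : Finset ℤ) (g : ℤ → ℤ) (p : ℤ × ℤ) : Prop :=
  IsSwap S S' g p ∨ IsRightShift S S' g p ∨ IsLeftShift S S' g p

open Classical in
noncomputable def blocks (S S' : Finset ℤ) (g : ℤ → ℤ) (k : ℤ) : Finset (ℤ × ℤ) :=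
  (Icc 0 k ×ˢ Icc 0 k).filter fun p => p.1 < p.2 ∧ IsBlock S S' g p

variable {S S' : Finset ℤ} {g f : ℤ → ℤ} {p q : ℤ × ℤ} {k : ℤ}

lemma mem_blocks :
    p ∈ blocks S S' g k ↔ (0 ≤ p.1 ∧ p.1 < p.2 ∧ p.2 ≤ k) ∧ IsBlock S S' g p := by
  simp only [blocks, mem_filter, mem_product, mem_Icc]
  constructor
  · rintro ⟨⟨⟨h0, -⟩, -, hk⟩, hlt, hp⟩
    exact ⟨⟨h0, hlt, hk⟩, hp⟩
  · rintro ⟨⟨h0, hlt, hk⟩, hp⟩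
    exact ⟨⟨⟨h0, by omega⟩, by omega, hk⟩, hlt, hp⟩

lemma mem_iff_of_inter_Icc_eq {T : Finset ℤ} {a b c d x : ℤ} (h : T ∩ Icc a b = Icc c d)
    (hax : a ≤ x) (hxb : x ≤ b) : x ∈ T ↔ c ≤ x ∧ x ≤ d := by
  simpa [hax, hxb] using Finset.ext_iff.mp h x

/-- Both intervals start at a point of `S \ S'` and end at the first point after it outside `S`. -/
lemma eq_of_shift_shape (hpS : S ∩ Icc p.1 p.2 = Icc p.1 (p.2 - 1))
    (hpS' : S' ∩ Icc p.1 p.2 = Icc (p.1 + 1) p.2) (hqS : S ∩ Icc q.1 q.2 = Icc q.1 (q.2 - 1))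
    (hqS' : S' ∩ Icc q.1 q.2 = Icc (q.1 + 1) q.2) {x : ℤ} (hxp : x ∈ Icc p.1 p.2)
    (hxq : x ∈ Icc q.1 q.2) : p = q := by
  wlog hle : p.1 ≤ q.1 generalizing p q
  · exact (this hqS hqS' hpS hpS' hxq hxp (by omega)).symm
  rw [mem_Icc] at hxp hxq
  have h1 : p.1 = q.1 := by
    by_contra hne
    have hq1 : q.1 ∈ S' := (mem_iff_of_inter_Icc_eq hpS' hle (by omega)).2 ⟨by omega, by omega⟩
    have := (mem_iff_of_inter_Icc_eq hqS' le_rfl (by omega)).1 hq1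
    omega
  have h2 : p.2 = q.2 := by
    rcases lt_trichotomy p.2 q.2 with hlt | heq | hlt
    · have hp2 : p.2 ∈ S := (mem_iff_of_inter_Icc_eq hqS (by omega) hlt.le).2 ⟨by omega, by omega⟩
      have := (mem_iff_of_inter_Icc_eq hpS (by omega) le_rfl).1 hp2
      omega
    · exact heq
    · have hq2 : q.2 ∈ S := (mem_iff_of_inter_Icc_eq hpS (by omega) hlt.le).2 ⟨by omega, by omega⟩
      have := (mem_iff_of_inter_Icc_eq hqS (by omega) le_rfl).1 hq2
      omega
  exact Prod.ext h1 h2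

lemma IsRightShift.disjoint_isLeftShift (hinj : Set.InjOn g S) (hp : IsRightShift S S' g p)
    (hq : IsLeftShift S S' g q) (hp' : p.1 < p.2) (hq' : q.1 < q.2) :
    Disjoint (Icc p.1 p.2) (Icc q.1 q.2) := by
  rw [disjoint_left]
  intro x hxp hxq
  rw [mem_Icc] at hxp hxq
  have hpS := fun y (h1 : p.1 ≤ y) (h2 : y ≤ p.2) => mem_iff_of_inter_Icc_eq hp.1 h1 h2
  have hqS := fun y (h1 : q.1 ≤ y) (h2 : y ≤ q.2) => mem_iff_of_inter_Icc_eq hq.2.1 h1 h2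
  have hpg : ∀ y, p.1 ≤ y → y < p.2 → y ∈ S ∧ g y = y + 1 := fun y h1 h2 =>
    have hy := (hpS y h1 h2.le).2 ⟨h1, by omega⟩
    ⟨hy, hp.2.2 y (mem_inter.2 ⟨hy, mem_Icc.2 ⟨h1, h2.le⟩⟩)⟩
  have hqg : ∀ y, q.1 < y → y ≤ q.2 → y ∈ S ∧ g y = y - 1 := fun y h1 h2 =>
    have hy := (hqS y h1.le h2).2 ⟨h1, h2⟩
    ⟨hy, hq.2.2 y (mem_inter.2 ⟨hy, mem_Icc.2 ⟨h1.le, h2⟩⟩)⟩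
  by_cases hmid : max p.1 (q.1 + 1) < p.2 ∧ max p.1 (q.1 + 1) ≤ q.2
  · have h1 := (hpg _ (le_max_left _ _) hmid.1).2
    have h2 := (hqg _ (by omega) hmid.2).2
    omega
  obtain hc | hc : q.1 = p.2 - 1 ∨ q.1 = p.2 := by omega
  · have := (hqS q.1 le_rfl hq'.le).1 (hpg q.1 (by omega) (by omega)).1
    omega
  · have h1 := hpg (p.2 - 1) (by omega) (by omega)
    have h2 := hqg (p.2 + 1) (by omega) (by omega)
    have := hinj (x₁ := p.2 - 1) (x₂ := p.2 + 1) h1.1 h2.1 (by rw [h1.2, h2.2]; ring)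
    omega

lemma IsSwap.disjoint_isRightShift (hp : IsSwap S S' g p) (hq : IsRightShift S S' g q) :
    Disjoint (Icc p.1 p.2) (Icc q.1 q.2) := by
  obtain ⟨h2, h1S, h2S, -, hg2⟩ := hp
  rw [disjoint_left]
  intro x hxp hxq
  rw [mem_Icc] at hxp hxq
  by_cases hin : p.2 ≤ q.2
  · have := hq.2.2 p.2 (mem_inter.2 ⟨(mem_inter.1 h2S).1, mem_Icc.2 ⟨by omega, hin⟩⟩)
    omega
  · have := (mem_iff_of_inter_Icc_eq hq.1 (by omega) (by omega)).1 (mem_inter.1 h1S).1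
    omega

lemma IsSwap.disjoint_isLeftShift (hp : IsSwap S S' g p) (hq : IsLeftShift S S' g q) :
    Disjoint (Icc p.1 p.2) (Icc q.1 q.2) := by
  obtain ⟨h2, h1S, h2S, hg1, -⟩ := hp
  rw [disjoint_left]
  intro x hxp hxq
  rw [mem_Icc] at hxp hxq
  by_cases hin : q.1 ≤ p.1
  · have := hq.2.2 p.1 (mem_inter.2 ⟨(mem_inter.1 h1S).1, mem_Icc.2 ⟨hin, by omega⟩⟩)
    omega
  · have := (mem_iff_of_inter_Icc_eq hq.2.1 (by omega) (by omega)).1 (mem_inter.1 h2S).1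
    omega

lemma IsSwap.disjoint (hp : IsSwap S S' g p) (hq : IsSwap S S' g q) (hpq : p ≠ q) :
    Disjoint (Icc p.1 p.2) (Icc q.1 q.2) := by
  obtain ⟨hp2, -, -, hpg1, hpg2⟩ := hp
  obtain ⟨hq2, -, -, hqg1, hqg2⟩ := hq
  rw [disjoint_left]
  intro x hxp hxq
  rw [mem_Icc] at hxp hxq
  have hne : p.1 ≠ q.1 := fun h => hpq (Prod.ext h (by omega))
  obtain h | h : q.1 = p.2 ∨ p.1 = q.2 := by omega
  · rw [← h, hqg1] at hpg2
    omega
  · rw [← h, hpg1] at hqg2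
    omega

lemma IsBlock.disjoint (hinj : Set.InjOn g S) (hp : IsBlock S S' g p) (hq : IsBlock S S' g q)
    (hp' : p.1 < p.2) (hq' : q.1 < q.2) (hpq : p ≠ q) :
    Disjoint (Icc p.1 p.2) (Icc q.1 q.2) := by
  rcases hp with hp | hp | hp <;> rcases hq with hq | hq | hq
  · exact hp.disjoint hq hpq
  · exact hp.disjoint_isRightShift hq
  · exact hp.disjoint_isLeftShift hq
  · exact (hq.disjoint_isRightShift hp).symm
  · exact disjoint_left.2 fun x hxp hxq => hpq (eq_of_shift_shape hp.1 hp.2.1 hq.1 hq.2.1 hxp hxq)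
  · exact hp.disjoint_isLeftShift hinj hq hp' hq'
  · exact (hq.disjoint_isLeftShift hp).symm
  · exact (hq.disjoint_isLeftShift hinj hp hq' hp').symm
  · exact disjoint_left.2 fun x hxp hxq => hpq (eq_of_shift_shape hp.1 hp.2.1 hq.1 hq.2.1 hxp hxq)

lemma IsSwap.of_leftInvOn (hgf : Set.LeftInvOn g f S') (hp : IsSwap S' S f p) :
    IsSwap S S' g p := by
  obtain ⟨h2, h1S, h2S, hh1, hh2⟩ := hp
  refine ⟨h2, inter_comm S S' ▸ h1S, inter_comm S S' ▸ h2S, ?_, ?_⟩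
  · rw [← hh2, hgf (mem_inter.1 h2S).1]
  · rw [← hh1, hgf (mem_inter.1 h1S).1]

lemma IsRightShift.isLeftShift_of_leftInvOn (hgf : Set.LeftInvOn g f S')
    (hp : IsRightShift S' S f p) : IsLeftShift S S' g p := by
  refine ⟨hp.1, hp.2.1, fun i hi => ?_⟩
  rw [hp.2.1, mem_Icc] at hi
  have hi' : i - 1 ∈ S' ∩ Icc p.1 p.2 := by rw [hp.1, mem_Icc]; omega
  have hhi : f (i - 1) = i := by rw [hp.2.2 _ hi', sub_add_cancel]
  calc g i = g (f (i - 1)) := by rw [hhi]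
    _ = i - 1 := hgf (mem_inter.1 hi').1

lemma IsLeftShift.isRightShift_of_leftInvOn (hgf : Set.LeftInvOn g f S')
    (hp : IsLeftShift S' S f p) : IsRightShift S S' g p := by
  refine ⟨hp.1, hp.2.1, fun i hi => ?_⟩
  rw [hp.1, mem_Icc] at hi
  have hi' : i + 1 ∈ S' ∩ Icc p.1 p.2 := by rw [hp.2.1, mem_Icc]; omega
  have hhi : f (i + 1) = i := by rw [hp.2.2 _ hi', add_sub_cancel_right]
  calc g i = g (f (i + 1)) := by rw [hhi]
    _ = i + 1 := hgf (mem_inter.1 hi').1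

lemma IsBlock.of_leftInvOn (hgf : Set.LeftInvOn g f S') (hp : IsBlock S' S f p) :
    IsBlock S S' g p := by
  rcases hp with hp | hp | hp
  · exact Or.inl (hp.of_leftInvOn hgf)
  · exact Or.inr (Or.inr (hp.isLeftShift_of_leftInvOn hgf))
  · exact Or.inr (Or.inl (hp.isRightShift_of_leftInvOn hgf))

lemma blocks_subset_of_leftInvOn (hgf : Set.LeftInvOn g f S') :
    blocks S' S f k ⊆ blocks S S' g k := fun _ hp =>
  mem_blocks.2 ⟨(mem_blocks.1 hp).1, (mem_blocks.1 hp).2.of_leftInvOn hgf⟩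

lemma IsRightShift.fst_mem (hp : IsRightShift S S' g p) (hlt : p.1 < p.2) : p.1 ∈ S :=
  (mem_iff_of_inter_Icc_eq hp.1 le_rfl hlt.le).2 ⟨le_rfl, by omega⟩

lemma IsRightShift.snd_mem (hp : IsRightShift S S' g p) (hlt : p.1 < p.2) : p.2 ∈ S' :=
  (mem_iff_of_inter_Icc_eq hp.2.1 hlt.le le_rfl).2 ⟨by omega, le_rfl⟩

lemma isRightShift_of_run (hmaps : Set.MapsTo g S S') {a b : ℤ}
    (hrun : ∀ j, a ≤ j → j < b → j ∈ S ∧ g j = j + 1) (hb : b ∉ S) (ha : a ∉ S') :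
    IsRightShift S S' g (a, b) := by
  refine ⟨?_, ?_, ?_⟩
  · ext x
    simp only [mem_inter, mem_Icc]
    constructor
    · rintro ⟨hx, hax, hxb⟩
      have : x ≠ b := by rintro rfl; exact hb hx
      omega
    · rintro ⟨hax, hxb⟩
      exact ⟨(hrun x hax (by omega)).1, hax, by omega⟩
  · ext x
    simp only [mem_inter, mem_Icc]
    constructor
    · rintro ⟨hx, hax, hxb⟩
      have : x ≠ a := by rintro rfl; exact ha hx
      omega
    · rintro ⟨hax, hxb⟩
      obtain ⟨hx, hgx⟩ := hrun (x - 1) (by omega) (by omega)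
      have := hmaps hx
      rw [hgx, sub_add_cancel] at this
      exact ⟨this, by omega, hxb⟩
  · intro x hx
    simp only [mem_inter, mem_Icc] at hx
    have : x ≠ b := by rintro rfl; exact hb hx.1
    exact (hrun x hx.2.1 (by omega)).2

lemma map_add_one_of_not_swap (hinj : Set.InjOn g S)
    (hdisp : ∀ i ∈ S, g i = i - 1 ∨ g i = i ∨ g i = i + 1) {j : ℤ} (hj : j ∈ S) (hgj : g j = j + 1)
    (hswap : ¬(j + 1 ∈ S ∧ g (j + 1) = j)) (hj1 : j + 1 ∈ S) :
    g (j + 1) = j + 1 + 1 ∧ ¬(j + 1 + 1 ∈ S ∧ g (j + 1 + 1) = j + 1) := by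
  have hne : g (j + 1) ≠ j + 1 := fun h => by
    have := hinj hj hj1 (hgj.trans h.symm)
    omega
  have hg : g (j + 1) = j + 1 + 1 := by
    rcases hdisp _ hj1 with h | h | h
    · exact absurd ⟨hj1, by rw [h]; ring⟩ hswap
    · exact absurd h hne
    · exact h
  refine ⟨hg, fun ⟨hj2, hgj2⟩ => ?_⟩
  have := hinj hj hj2 (hgj.trans hgj2.symm)
  omega

lemma map_eq_add_one_of_run (hinj : Set.InjOn g S)
    (hdisp : ∀ i ∈ S, g i = i - 1 ∨ g i = i ∨ g i = i + 1) {i b : ℤ} (hi : i ∈ S)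
    (hgi : g i = i + 1) (hswap : ¬(i + 1 ∈ S ∧ g (i + 1) = i))
    (hrun : ∀ j, i < j → j < b → j ∈ S) {j : ℤ} (hij : i ≤ j) (hjb : j < b) : g j = j + 1 := by
  suffices ∀ j, i ≤ j → j < b → j ∈ S ∧ g j = j + 1 ∧ ¬(j + 1 ∈ S ∧ g (j + 1) = j) from
    (this j hij hjb).2.1
  intro j hij
  induction j, hij using Int.leInduction with
  | base => exact fun _ => ⟨hi, hgi, hswap⟩
  | succ j hij ih =>
    intro hjb
    obtain ⟨hj, hgj, hsw⟩ := ih (by omega)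
    have hj1 := hrun (j + 1) (by omega) hjb
    exact ⟨hj1, map_add_one_of_not_swap hinj hdisp hj hgj hsw hj1⟩

lemma exists_isRightShift (hS : S ⊆ Icc 0 k) (hbij : Set.BijOn g S S')
    (hdisp : ∀ i ∈ S, g i = i - 1 ∨ g i = i ∨ g i = i + 1) {i : ℤ} (hi : i ∈ S)
    (hgi : g i = i + 1) (hswap : ¬(i + 1 ∈ S ∧ g (i + 1) = i)) :
    ∃ p, IsRightShift S S' g p ∧ p.1 ≤ i ∧ i < p.2 := by
  have hSk : ∀ j ∈ S, 0 ≤ j ∧ j ≤ k := fun j hj => mem_Icc.1 (hS hj)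
  obtain ⟨b, ⟨hib, hbS⟩, hbmin⟩ := Int.exists_least_of_bdd (P := fun z => i < z ∧ z ∉ S)
    ⟨i, fun z hz => hz.1.le⟩
    ⟨k + 1, by have := hSk i hi; omega, fun h => by have := hSk _ h; omega⟩
  have hSrun : ∀ j, i < j → j < b → j ∈ S := fun j hij hjb => by
    by_contra hj
    have := hbmin j ⟨hij, hj⟩
    omega
  obtain ⟨a, ⟨hai, harun⟩, hamin⟩ := Int.exists_least_of_bdd
    (P := fun z => z ≤ i ∧ ∀ j, z ≤ j → j ≤ i → j ∈ S ∧ g j = j + 1)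
    ⟨0, fun z hz => (hSk z (hz.2 z le_rfl hz.1).1).1⟩
    ⟨i, le_rfl, fun j h1 h2 => (show j = i by omega) ▸ ⟨hi, hgi⟩⟩
  have hrun : ∀ j, a ≤ j → j < b → j ∈ S ∧ g j = j + 1 := fun j haj hjb => by
    rcases le_or_gt j i with hji | hij
    · exact harun j haj hji
    · exact ⟨hSrun j hij hjb,
        map_eq_add_one_of_run hbij.injOn hdisp hi hgi hswap hSrun hij.le hjb⟩
  have haS' : a ∉ S' := by
    intro ha
    obtain ⟨j, hj, hja⟩ := hbij.surjOn ha
    rcases hdisp j hj with h | h | h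
    · rcases le_or_gt j i with hji | hij
      · have := (hrun j (by omega) (by omega)).2
        omega
      · obtain rfl : j = i + 1 := by omega
        exact hswap ⟨hj, by omega⟩
    · have := (hrun j (by omega) (by omega)).2
      omega
    · have := hamin (a - 1) ⟨by omega, fun m h1 h2 => by
        rcases eq_or_lt_of_le h1 with rfl | h1
        · obtain rfl : j = a - 1 := by omega
          exact ⟨hj, by omega⟩
        · exact harun m (by omega) h2⟩
      omega
  exact ⟨(a, b), isRightShift_of_run hbij.mapsTo hrun hbS haS', hai, hib⟩

lemma exists_mem_blocks_of_map_eq_add_one (hS : S ⊆ Icc 0 k) (hS' : S' ⊆ Icc 0 k)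
    (hbij : Set.BijOn g S S') (hdisp : ∀ i ∈ S, g i = i - 1 ∨ g i = i ∨ g i = i + 1) {i : ℤ}
    (hi : i ∈ S) (hgi : g i = i + 1) : ∃ p ∈ blocks S S' g k, p.1 ≤ i ∧ i + 1 ≤ p.2 := by
  by_cases hswap : i + 1 ∈ S ∧ g (i + 1) = i
  · have hi' : i ∈ S' := hswap.2 ▸ hbij.mapsTo hswap.1
    have hi1' : i + 1 ∈ S' := hgi ▸ hbij.mapsTo hi
    have h1 := mem_Icc.1 (hS hi)
    have h2 := mem_Icc.1 (hS hswap.1)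
    exact ⟨(i, i + 1), mem_blocks.2 ⟨⟨h1.1, by simp, h2.2⟩,
      Or.inl ⟨rfl, mem_inter.2 ⟨hi, hi'⟩, mem_inter.2 ⟨hswap.1, hi1'⟩, hgi, hswap.2⟩⟩,
      le_rfl, le_rfl⟩
  · obtain ⟨p, hp, hpi, hip⟩ := exists_isRightShift hS hbij hdisp hi hgi hswap
    have h1 := mem_Icc.1 (hS (hp.fst_mem (by omega)))
    have h2 := mem_Icc.1 (hS' (hp.snd_mem (by omega)))
    exact ⟨p, mem_blocks.2 ⟨⟨h1.1, by omega, h2.2⟩, Or.inr (Or.inl hp)⟩, hpi, hip⟩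

lemma exists_mem_blocks_of_map_ne (hS : S ⊆ Icc 0 k) (hS' : S' ⊆ Icc 0 k)
    (hbij : Set.BijOn g S S') (hdisp : ∀ i ∈ S, g i = i - 1 ∨ g i = i ∨ g i = i + 1) {i : ℤ}
    (hi : i ∈ S) (hgi : g i ≠ i) :
    ∃ p ∈ blocks S S' g k, i ∈ Icc p.1 p.2 ∧ g i ∈ Icc p.1 p.2 := by
  rcases hdisp i hi with h | h | h
  · -- moving down for `g` is moving up for its inverse
    set f := Function.invFunOn g S
    have hinv : Set.InvOn f g S S' := hbij.invOn_invFunOn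
    have hfbij : Set.BijOn f S' S := hbij.symm hinv.symm
    have hfdisp : ∀ j ∈ S', f j = j - 1 ∨ f j = j ∨ f j = j + 1 := fun j hj => by
      have := hinv.2 hj
      rcases hdisp (f j) (hfbij.mapsTo hj) with h | h | h <;> omega
    have hfi : f (g i) = g i + 1 := by rw [hinv.1 hi]; omega
    obtain ⟨p, hp, hp1, hp2⟩ :=
      exists_mem_blocks_of_map_eq_add_one hS' hS hfbij hfdisp (hbij.mapsTo hi) hfi
    exact ⟨p, blocks_subset_of_leftInvOn hinv.2 hp, mem_Icc.2 ⟨by omega, by omega⟩,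
      mem_Icc.2 ⟨hp1, by omega⟩⟩
  · exact absurd h hgi
  · obtain ⟨p, hp, hp1, hp2⟩ := exists_mem_blocks_of_map_eq_add_one hS hS' hbij hdisp hi h
    exact ⟨p, hp, mem_Icc.2 ⟨hp1, by omega⟩, mem_Icc.2 ⟨by omega, by omega⟩⟩

lemma sdiff_eq_sdiff_of_bijOn (hbij : Set.BijOn g S S') {U : Finset ℤ}
    (hU : ∀ i ∈ S, g i ≠ i → g i ∈ U) (hfix : ∀ i ∈ S \ U, g i = i) : S \ U = S' \ U := by
  ext x
  simp only [mem_sdiff]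
  constructor
  · rintro ⟨hx, hxU⟩
    exact ⟨hfix x (mem_sdiff.2 ⟨hx, hxU⟩) ▸ hbij.mapsTo hx, hxU⟩
  · rintro ⟨hx, hxU⟩
    obtain ⟨j, hj, rfl⟩ := hbij.surjOn hx
    by_cases hgj : g j = j
    · rw [hgj] at hxU ⊢
      exact ⟨hj, hxU⟩
    · exact absurd (hU j hj hgj) hxU

end UnitDisplacement

open UnitDisplacement in
theorem stmt_2 (k : ℤ) (S S' : Finset ℤ)
    (hS : S ⊆ Finset.Icc 0 k) (hS' : S' ⊆ Finset.Icc 0 k)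
    (g : ℤ → ℤ) (hbij : Set.BijOn g ↑S ↑S')
    (hdisp : ∀ i ∈ S, g i = i - 1 ∨ g i = i ∨ g i = i + 1) :
    ∃ 𝓘 : Finset (ℤ × ℤ),
      (∀ p ∈ 𝓘, 0 ≤ p.1 ∧ p.1 ≤ p.2 ∧ p.2 ≤ k) ∧
      (∀ p ∈ 𝓘, ∀ q ∈ 𝓘, p ≠ q →
        Disjoint (Finset.Icc p.1 p.2) (Finset.Icc q.1 q.2)) ∧
      (S \ 𝓘.biUnion (fun p => Finset.Icc p.1 p.2)
        = S' \ 𝓘.biUnion (fun p => Finset.Icc p.1 p.2)) ∧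
      (∀ i ∈ S \ 𝓘.biUnion (fun p => Finset.Icc p.1 p.2), g i = i) ∧
      (∀ p ∈ 𝓘,
        (p.2 = p.1 + 1 ∧ p.1 ∈ S ∩ S' ∧ p.2 ∈ S ∩ S' ∧
          g p.1 = p.2 ∧ g p.2 = p.1) ∨
        (S ∩ Finset.Icc p.1 p.2 = Finset.Icc p.1 (p.2 - 1) ∧
          S' ∩ Finset.Icc p.1 p.2 = Finset.Icc (p.1 + 1) p.2 ∧
          ∀ i ∈ S ∩ Finset.Icc p.1 p.2, g i = i + 1) ∨
        (S' ∩ Finset.Icc p.1 p.2 = Finset.Icc p.1 (p.2 - 1) ∧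
          S ∩ Finset.Icc p.1 p.2 = Finset.Icc (p.1 + 1) p.2 ∧
          ∀ i ∈ S ∩ Finset.Icc p.1 p.2, g i = i - 1)) := by
  have hcover : ∀ i ∈ S, g i ≠ i →
      ∃ p ∈ blocks S S' g k, i ∈ Finset.Icc p.1 p.2 ∧ g i ∈ Finset.Icc p.1 p.2 :=
    fun i hi hgi => exists_mem_blocks_of_map_ne hS hS' hbij hdisp hi hgi
  have hfix : ∀ i ∈ S \ (blocks S S' g k).biUnion (fun p => Finset.Icc p.1 p.2), g i = i := by
    intro i hi
    rw [Finset.mem_sdiff, Finset.mem_biUnion] at hi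
    by_contra hgi
    obtain ⟨p, hp, hip, -⟩ := hcover i hi.1 hgi
    exact hi.2 ⟨p, hp, hip⟩
  refine ⟨blocks S S' g k, fun p hp => ?_, fun p hp q hq hpq => ?_, ?_, hfix,
    fun p hp => (mem_blocks.1 hp).2⟩
  · obtain ⟨⟨h0, hlt, hk⟩, -⟩ := mem_blocks.1 hp
    exact ⟨h0, hlt.le, hk⟩
  · exact (mem_blocks.1 hp).2.disjoint hbij.injOn (mem_blocks.1 hq).2
      (mem_blocks.1 hp).1.2.1 (mem_blocks.1 hq).1.2.1 hpq
  · refine sdiff_eq_sdiff_of_bijOn hbij (fun i hi hgi => ?_) hfix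
    obtain ⟨p, hp, -, hgip⟩ := hcover i hi hgi
    exact Finset.mem_biUnion.2 ⟨p, hp, hgip⟩
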